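/- arXiv:2110.12390 — 6 statements merged into one kernel-verified Lean document; each statement's English description precedes it below -/
import Mathlib

section
/- Let p = λ(1-φ)ω and q = φω with λ, ω > 0 and φ ∈ (0,1], and suppose φ - λ(1-φ) > 0 (equivalently q > p). Define x* = (1 - e^{p-q})/(1 - e^{-q}). Then x* > 0 and x* is a fixed point of the Poincaré map S̄(x0) = u(q, e^{-p} x0), where u(t, y) = y/(y + (1-y)e^{-t}) is the logistic flow. That is, e^{-p} x* / (e^{-p} x* + (1 - e^{-p} x*) e^{-q}) = x*. -/
/-! With `a = e^{-p}` and `b = e^{-q}`, the candidate `x = (1 - b/a)/(1 - b)` is exactly the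
value for which the logistic denominator `a x + (1 - a x) b = a x (1 - b) + b` collapses to `a`,
so the map sends `x` to `a x / a = x`. -/

open Real

lemma logistic_denom_eq {a b c : ℝ} (hb : b ≠ 1) (habc : a * c = b) :
    a * ((1 - c) / (1 - b)) + (1 - a * ((1 - c) / (1 - b))) * b = a := by
  have hb' : 1 - b ≠ 0 := sub_ne_zero.mpr hb.symm
  field_simp
  linear_combination (b - 1) * habc

lemma logistic_map_fixedPoint {a b c : ℝ} (ha : a ≠ 0) (hb : b ≠ 1) (habc : a * c = b) :
    a * ((1 - c) / (1 - b)) / (a * ((1 - c) / (1 - b)) + (1 - a * ((1 - c) / (1 - b))) * b)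
      = (1 - c) / (1 - b) := by
  rw [logistic_denom_eq hb habc, mul_div_cancel_left₀ _ ha]

lemma seasonal_fixedPoint_pos {p q : ℝ} (hq : 0 < q) (hpq : p < q) :
    0 < (1 - exp (p - q)) / (1 - exp (-q)) :=
  div_pos (sub_pos.mpr (exp_lt_one_iff.mpr (by linarith)))
    (sub_pos.mpr (exp_lt_one_iff.mpr (by linarith)))

theorem stmt_1_general (lam ω φ : ℝ) (hω : 0 < ω)
    (hφ : φ ∈ Set.Ioc (0 : ℝ) 1) (hpos : 0 < φ - lam * (1 - φ))
    (p q xs : ℝ) (hp : p = lam * (1 - φ) * ω) (hq : q = φ * ω)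
    (hxs : xs = (1 - Real.exp (p - q)) / (1 - Real.exp (-q))) :
    0 < xs ∧
    Real.exp (-p) * xs /
      (Real.exp (-p) * xs + (1 - Real.exp (-p) * xs) * Real.exp (-q)) = xs := by
  have hq0 : 0 < q := hq ▸ mul_pos hφ.1 hω
  have hpq : p < q := by
    have := mul_pos hpos hω
    rw [hp, hq]
    linarith
  have hexp : exp (-p) * exp (p - q) = exp (-q) := by
    rw [← exp_add]
    ring_nf
  subst hxs
  exact ⟨seasonal_fixedPoint_pos hq0 hpq,
    logistic_map_fixedPoint (exp_ne_zero _) (exp_lt_one_iff.mpr (neg_lt_zero.mpr hq0)).ne hexp⟩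

/-- `x* = (1 - e^{p-q})/(1 - e^{-q})` is a positive fixed point of the
one-dimensional seasonal logistic Poincaré map `S̄(x0) = u(q, e^{-p} x0)`. -/
theorem stmt_1 (lam ω φ : ℝ) (hlam : 0 < lam) (hω : 0 < ω)
    (hφ : φ ∈ Set.Ioc (0 : ℝ) 1) (hpos : 0 < φ - lam * (1 - φ))
    (p q xs : ℝ) (hp : p = lam * (1 - φ) * ω) (hq : q = φ * ω)
    (hxs : xs = (1 - Real.exp (p - q)) / (1 - Real.exp (-q))) :
    0 < xs ∧
    Real.exp (-p) * xs /
      (Real.exp (-p) * xs + (1 - Real.exp (-p) * xs) * Real.exp (-q)) = xs :=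
  stmt_1_general lam ω φ hω hφ hpos p q xs hp hq hxs
end

section
/- Let u*(t) be the solution of du/dt = u(1-u) with u*(0) = e^{-p} x* where x* = (1-e^{p-q})/(1-e^{-q}), p = λ(1-φ)ω > 0, q = φω > 0, q > p. Then the integral of u*(t) over [0, q] equals q - p, i.e., ∫₀^{q} u*(t) dt = (φ - λ(1-φ))ω. -/
/-- Let `u*(t)` be the logistic solution with `u*(0) = e^{-p} x*` where
`x* = (1-e^{p-q})/(1-e^{-q})`, `0 < p < q`. Then `∫₀^q u*(t) dt = q - p`,
i.e. `(φ - λ(1-φ)) ω`. -/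
theorem stmt_3 (lam ω φ : ℝ) (hlam : 0 < lam) (hω : 0 < ω)
    (hφ : φ ∈ Set.Ioc (0 : ℝ) 1)
    (p q xs y : ℝ) (hp : p = lam * (1 - φ) * ω) (hq : q = φ * ω)
    (hp0 : 0 < p) (hpq : p < q)
    (hxs : xs = (1 - Real.exp (p - q)) / (1 - Real.exp (-q)))
    (hy : y = Real.exp (-p) * xs) :
    ∫ t in (0:ℝ)..q, y / (y + (1 - y) * Real.exp (-t)) = (φ - lam * (1 - φ)) * ω := by
  have hq0 : 0 < q := lt_trans hp0 hpq
  have hb1 : Real.exp (-q) < 1 := Real.exp_lt_one_iff.mpr (by linarith)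
  have ha1 : Real.exp (-p) < 1 := Real.exp_lt_one_iff.mpr (by linarith)
  have hba : Real.exp (-q) < Real.exp (-p) := Real.exp_lt_exp.mpr (by linarith)
  have hyval : y = (Real.exp (-p) - Real.exp (-q)) / (1 - Real.exp (-q)) := by
    rw [hy, hxs]
    rw [eq_div_iff (by linarith)]
    field_simp
    have e : Real.exp (-p) * Real.exp (p - q) = Real.exp (-q) := by
      rw [← Real.exp_add]; ring_nf
    rw [mul_div_assoc, div_self (by linarith : (1:ℝ) - Real.exp (-q) ≠ 0), mul_one]
    linarith [e]
  have hy0 : 0 < y := by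
    rw [hyval]; apply div_pos <;> linarith
  have hy1 : y < 1 := by
    rw [hyval, div_lt_one (by linarith)]; linarith
  -- FTC with antiderivative log (y * exp t + (1 - y))
  have hpos : ∀ t : ℝ, 0 < y * Real.exp t + (1 - y) := by
    intro t
    have := Real.exp_pos t
    nlinarith
  have hderiv : ∀ t ∈ Set.uIcc (0:ℝ) q,
      HasDerivAt (fun t => Real.log (y * Real.exp t + (1 - y)))
        (y / (y + (1 - y) * Real.exp (-t))) t := by
    intro t _
    have h1 : HasDerivAt (fun t => y * Real.exp t + (1 - y)) (y * Real.exp t) t := by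
      simpa using ((Real.hasDerivAt_exp t).const_mul y).add_const (1 - y)
    have h2 := (Real.hasDerivAt_log (ne_of_gt (hpos t))).comp t h1
    convert h2 using 1
    case e'_4 => rfl
    case e'_5 => rfl
    case e'_8 => rfl
    have het := Real.exp_pos t
    have hent := Real.exp_pos (-t)
    have hmul : Real.exp t * Real.exp (-t) = 1 := by
      rw [← Real.exp_add]; simp
    have hd : 0 < y + (1 - y) * Real.exp (-t) := by nlinarith
    rw [inv_mul_eq_div, div_eq_div_iff (ne_of_gt hd) (ne_of_gt (hpos t))]
    linear_combination (y^2 - y) * hmul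
  have hcont : IntervalIntegrable (fun t => y / (y + (1 - y) * Real.exp (-t)))
      MeasureTheory.volume 0 q := by
    apply ContinuousOn.intervalIntegrable
    apply ContinuousOn.div continuousOn_const
    · exact (continuousOn_const.add (continuousOn_const.mul (Real.continuous_exp.comp continuous_neg).continuousOn))
    · intro t _
      have hent := Real.exp_pos (-t)
      nlinarith
  rw [intervalIntegral.integral_eq_sub_of_hasDerivAt hderiv hcont]
  have hkey : y * Real.exp q + (1 - y) = Real.exp (q - p) := by
    rw [hyval]
    have h1b : (1:ℝ) - Real.exp (-q) ≠ 0 := by linarith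
    have e1 : Real.exp (-p) * Real.exp q = Real.exp (q - p) := by
      rw [← Real.exp_add]; ring_nf
    have e2 : Real.exp (-q) * Real.exp q = 1 := by
      rw [← Real.exp_add]; simp
    have e3 : Real.exp (q - p) * Real.exp (-q) = Real.exp (-p) := by
      rw [← Real.exp_add]; ring_nf
    field_simp
    linear_combination e1 - e2 + e3
  simp only [Real.exp_zero, mul_one]
  rw [hkey, Real.log_exp]
  have : y + (1 - y) = 1 := by ring
  rw [this, Real.log_one]
  rw [hp, hq]; ring
end

section
/- Define ϑ(φ) = (7.6φ - 1.6)(5.4φ + 0.6)(9.2φ - 3.2) - (8.32φ - 2.22)(3.71φ + 2.39)(10.54φ - 4.44) for φ ∈ [4.44/10.54, 1]. Then ϑ has exactly one zero φ₀ in this interval; moreover ϑ(φ) > 0 for φ ∈ [4.44/10.54, φ₀) and ϑ(φ) < 0 for φ ∈ (φ₀, 1]. -/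
/-!
On `[4.44/10.54, 0.48]` the cubic `ϑ` is positive, and on `[0.48, 1]` it is strictly decreasing
(its divided difference is a convex quadratic in two variables, negative at the corners of the
square) with `ϑ 1 < 0`. The intermediate value theorem gives a zero in `[0.48, 1]`, and the two
facts together force the sign pattern, which in turn makes the zero unique.
-/

open Set

section SignChange

variable {f : ℝ → ℝ} {a b c : ℝ}

theorem existsUnique_sign_change_of_pos_of_strictAntiOn (hac : a ≤ c) (hcb : c ≤ b)
    (hf : ContinuousOn f (Icc c b)) (hpos : ∀ x ∈ Icc a c, 0 < f x)
    (hanti : StrictAntiOn f (Icc c b)) (hb : f b < 0) :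
    ∃! x₀, x₀ ∈ Icc a b ∧ f x₀ = 0 ∧
      (∀ x ∈ Icc a b, x < x₀ → 0 < f x) ∧ (∀ x ∈ Icc a b, x₀ < x → f x < 0) := by
  obtain ⟨x₀, hx₀, hfx₀⟩ : (0 : ℝ) ∈ f '' Icc c b :=
    intermediate_value_Icc' hcb hf ⟨hb.le, (hpos c ⟨hac, le_rfl⟩).le⟩
  have hbefore : ∀ x ∈ Icc a b, x < x₀ → 0 < f x := by
    intro x hx hlt
    rcases le_or_gt x c with hxc | hcx
    · exact hpos x ⟨hx.1, hxc⟩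
    · simpa [hfx₀] using hanti ⟨hcx.le, hx.2⟩ hx₀ hlt
  have hafter : ∀ x ∈ Icc a b, x₀ < x → f x < 0 := fun x hx hlt => by
    simpa [hfx₀] using hanti hx₀ ⟨hx₀.1.trans hlt.le, hx.2⟩ hlt
  refine ⟨x₀, ⟨⟨hac.trans hx₀.1, hx₀.2⟩, hfx₀, hbefore, hafter⟩, ?_⟩
  rintro y ⟨hy, hfy, -, -⟩
  rcases lt_trichotomy y x₀ with hlt | heq | hgt
  · exact absurd hfy (hbefore y hy hlt).ne'
  · exact heq
  · exact absurd hfy (hafter y hy hgt).ne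

end SignChange

section StabilityIndicator

noncomputable def stabilityIndicator (φ : ℝ) : ℝ :=
  (7.6 * φ - 1.6) * (5.4 * φ + 0.6) * (9.2 * φ - 3.2)
    - (8.32 * φ - 2.22) * (3.71 * φ + 2.39) * (10.54 * φ - 4.44)

noncomputable def stabilityIndicatorSlope (x y : ℝ) : ℝ :=
  816058 / 15625 * (x ^ 2 + x * y + y ^ 2) - 38647469 / 250000 * (x + y) + 27966729 / 250000

theorem continuous_stabilityIndicator : Continuous stabilityIndicator := by
  unfold stabilityIndicator
  fun_prop

theorem stabilityIndicator_sub (x y : ℝ) :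
    stabilityIndicator y - stabilityIndicator x = (y - x) * stabilityIndicatorSlope x y := by
  unfold stabilityIndicator stabilityIndicatorSlope
  ring

theorem stabilityIndicatorSlope_neg {x y : ℝ} (hx : x ∈ Icc (0.48 : ℝ) 1)
    (hy : y ∈ Icc (0.48 : ℝ) 1) : stabilityIndicatorSlope x y < 0 := by
  obtain ⟨hx, hx1⟩ := hx
  obtain ⟨hy, hy1⟩ := hy
  unfold stabilityIndicatorSlope
  nlinarith [mul_nonneg (sub_nonneg.2 hx) (sub_nonneg.2 hy1),
    mul_nonneg (sub_nonneg.2 hx) (sub_nonneg.2 hx1),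
    mul_nonneg (sub_nonneg.2 hy) (sub_nonneg.2 hy1),
    mul_nonneg (sub_nonneg.2 hy) (sub_nonneg.2 hx1)]

theorem stabilityIndicator_strictAntiOn : StrictAntiOn stabilityIndicator (Icc 0.48 1) := by
  intro x hx y hy hxy
  have hdiff := stabilityIndicator_sub x y
  have hprod : (y - x) * stabilityIndicatorSlope x y < 0 :=
    mul_neg_of_pos_of_neg (sub_pos.2 hxy) (stabilityIndicatorSlope_neg hx hy)
  linarith

theorem stabilityIndicator_pos {φ : ℝ} (hφ : φ ∈ Icc (4.44 / 10.54 : ℝ) 0.48) :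
    0 < stabilityIndicator φ := by
  obtain ⟨hlo, hhi⟩ := hφ
  unfold stabilityIndicator
  nlinarith [mul_nonneg (sub_nonneg.2 hlo) (sub_nonneg.2 hhi), sq_nonneg (φ - 0.45),
    sq_nonneg φ]

theorem stabilityIndicator_one_neg : stabilityIndicator 1 < 0 := by
  norm_num [stabilityIndicator]

end StabilityIndicator

/-- The cubic stability indicator `ϑ(φ)` has exactly one zero `φ₀` in
`[4.44/10.54, 1]`; it is positive before `φ₀` and negative after. -/
theorem stmt_8
    (ϑ : ℝ → ℝ)
    (hϑ : ∀ φ, ϑ φ = (7.6 * φ - 1.6) * (5.4 * φ + 0.6) * (9.2 * φ - 3.2)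
        - (8.32 * φ - 2.22) * (3.71 * φ + 2.39) * (10.54 * φ - 4.44)) :
    ∃! φ₀, φ₀ ∈ Set.Icc (4.44 / 10.54 : ℝ) 1 ∧ ϑ φ₀ = 0 ∧
      (∀ φ ∈ Set.Icc (4.44 / 10.54 : ℝ) 1, φ < φ₀ → 0 < ϑ φ) ∧
      (∀ φ ∈ Set.Icc (4.44 / 10.54 : ℝ) 1, φ₀ < φ → ϑ φ < 0) := by
  obtain rfl : ϑ = stabilityIndicator := funext hϑ
  exact existsUnique_sign_change_of_pos_of_strictAntiOn (by norm_num) (by norm_num)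
    continuous_stabilityIndicator.continuousOn (fun _ => stabilityIndicator_pos)
    stabilityIndicator_strictAntiOn stabilityIndicator_one_neg
end

section
/- Suppose α + β = 2 and let Q_t denote the flow of the symmetric May–Leonard system. Then the plane π = {x ∈ ℝ³₊ : x₁ + x₂ + x₃ = c} is mapped by the composite map S(x) = Q_{q}(e^{-p} x) into the plane {x ∈ ℝ³₊ : x₁ + x₂ + x₃ = c'}, where c' = e^{-p} c / (e^{-p} c + (1 - e^{-p} c) e^{-q}). In particular, if c = (1 - e^{p-q})/(1 - e^{-q}) with 0 < p < q, then c' = c and π is invariant under S. -/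
/-- With `α + β = 2`, the composite map `S = Q_q ∘ (e^{-p}·)` maps the plane
`{x ∈ ℝ³₊ : x₁+x₂+x₃ = c}` into `{x₁+x₂+x₃ = c'}` where
`c' = e^{-p}c/(e^{-p}c + (1-e^{-p}c)e^{-q})`; in particular for
`c = (1-e^{p-q})/(1-e^{-q})` with `0 < p < q`, one has `c' = c`. -/
theorem stmt_11 (α β p q c : ℝ) (hαβ : α + β = 2) (hp : 0 < p) (hpq : p < q)
    (x₁ x₂ x₃ : ℝ → ℝ)
    (hnn : 0 ≤ x₁ 0 ∧ 0 ≤ x₂ 0 ∧ 0 ≤ x₃ 0)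
    (hx1 : ∀ t, HasDerivAt x₁ (x₁ t * (1 - x₁ t - α * x₂ t - β * x₃ t)) t)
    (hx2 : ∀ t, HasDerivAt x₂ (x₂ t * (1 - β * x₁ t - x₂ t - α * x₃ t)) t)
    (hx3 : ∀ t, HasDerivAt x₃ (x₃ t * (1 - α * x₁ t - β * x₂ t - x₃ t)) t)
    (hinit : x₁ 0 + x₂ 0 + x₃ 0 = Real.exp (-p) * c) :
    x₁ q + x₂ q + x₃ q =
      Real.exp (-p) * c /
        (Real.exp (-p) * c + (1 - Real.exp (-p) * c) * Real.exp (-q)) ∧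
    (c = (1 - Real.exp (p - q)) / (1 - Real.exp (-q)) →
      x₁ q + x₂ q + x₃ q = c) := by
  set Y : ℝ → ℝ := fun t => x₁ t + x₂ t + x₃ t with hYdef
  set Y0 : ℝ := Real.exp (-p) * c with hY0def
  have hY : ∀ t, HasDerivAt Y (Y t * (1 - Y t)) t := by
    intro t
    have h := ((hx1 t).add (hx2 t)).add (hx3 t)
    refine h.congr_deriv (Eq.symm ?_)
    simp only [hYdef]
    linear_combination (x₁ t * x₂ t + x₁ t * x₃ t + x₂ t * x₃ t) * hαβ
  have hYcont : Continuous Y := by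
    have : Differentiable ℝ Y := fun t => (hY t).differentiableAt
    exact this.continuous
  have hY0 : Y 0 = Y0 := hinit
  -- antiderivative of Y
  set I : ℝ → ℝ := fun t => ∫ s in (0:ℝ)..t, Y s with hIdef
  have hI : ∀ t, HasDerivAt I (Y t) t := fun t =>
    (hYcont.integral_hasStrictDerivAt 0 t).hasDerivAt
  set H : ℝ → ℝ := fun t => Y t * (Y0 + (1 - Y0) * Real.exp (-t)) - Y0 with hHdef
  have hH : ∀ t, HasDerivAt H (-(Y t) * H t) t := by
    intro t
    have hd : HasDerivAt (fun t => Y0 + (1 - Y0) * Real.exp (-t))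
        ((1 - Y0) * (-Real.exp (-t))) t := by
      have : HasDerivAt (fun t : ℝ => Real.exp (-t)) (-Real.exp (-t)) t := by
        exact ((Real.hasDerivAt_exp (-t)).comp t (hasDerivAt_neg t)).congr_deriv (by ring)
      simpa using (this.const_mul (1 - Y0)).const_add Y0
    have h := ((hY t).mul hd).sub_const Y0
    refine h.congr_deriv (Eq.symm ?_)
    simp only [hHdef]
    ring
  set K : ℝ → ℝ := fun t => H t * Real.exp (I t) with hKdef
  have hK : ∀ t, HasDerivAt K 0 t := by
    intro t
    have h := (hH t).mul ((Real.hasDerivAt_exp (I t)).comp t (hI t))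
    simp only [Function.comp] at h
    refine h.congr_deriv (Eq.symm ?_)
    ring
  have hKconst : K q = K 0 :=
    is_const_of_deriv_eq_zero (fun t => (hK t).differentiableAt)
      (fun t => (hK t).deriv) q 0
  have hI0 : I 0 = 0 := by simp [hIdef]
  have hH0 : H 0 = 0 := by simp [hHdef, hY0]
  have hK0 : K 0 = 0 := by simp [hKdef, hH0]
  have hHq : H q = 0 := by
    have := hKconst.trans hK0
    simp only [hKdef] at this
    exact (mul_eq_zero.mp this).resolve_right (Real.exp_ne_zero _)
  have hYq : Y q * (Y0 + (1 - Y0) * Real.exp (-q)) = Y0 := by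
    simpa [hHdef, sub_eq_zero] using hHq
  have hq : 0 < q := hp.trans hpq
  have heq : Real.exp (-q) < 1 := Real.exp_lt_one_iff.mpr (by linarith)
  have hepos : 0 < Real.exp (-q) := Real.exp_pos _
  have hY0nn : 0 ≤ Y0 := by
    rw [← hY0]; obtain ⟨h1, h2, h3⟩ := hnn; simp only [hYdef]; linarith
  have hdpos : 0 < Y0 + (1 - Y0) * Real.exp (-q) := by nlinarith
  have hmain : Y q = Y0 / (Y0 + (1 - Y0) * Real.exp (-q)) := by
    field_simp
    linarith [hYq]
  refine ⟨hmain, fun hc => ?_⟩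
  rw [show x₁ q + x₂ q + x₃ q = Y q from rfl, hmain]
  have h1q : (0:ℝ) < 1 - Real.exp (-q) := by linarith
  have hcq : c * (1 - Real.exp (-q)) = 1 - Real.exp (p - q) := by
    rw [hc]; field_simp
  have hY0c : Y0 = Real.exp (-p) * c := hY0def
  rw [div_eq_iff (ne_of_gt hdpos)]
  have hexp : Real.exp (-p) * Real.exp (p - q) = Real.exp (-q) := by
    rw [← Real.exp_add]; ring_nf
  rw [hY0def]
  linear_combination (-c * Real.exp (-p)) * hcq + c * hexp
end

section
/- Let S = Q_q ∘ L where L is multiplication by e^{-p} and Q_q is the time-q symmetric May–Leonard flow with α + β = 2, 0 < p < q. Then P = ((1-e^{p-q})/(3(1-e^{-q})))·(1,1,1) is a fixed point of S. -/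
open Real Set

/-- Key algebraic estimate for one component of the difference of the vector
field at `(X,Y,Z)` and at the diagonal point `(G,G,G)`. -/
lemma stmt13_key (α β B X Y Z G M : ℝ) (hαβ : α + β = 2)
    (hX : |X| ≤ B) (hG : |G| ≤ B)
    (h1 : |X - G| ≤ M) (h2 : |Y - G| ≤ M) (h3 : |Z - G| ≤ M) :
    |X * (1 - X - α * Y - β * Z) - G * (1 - 3 * G)| ≤
      (1 + 2 * B + 2 * |α| * B + 2 * |β| * B) * M := by
  have hM : 0 ≤ M := le_trans (abs_nonneg _) h1
  have hB : 0 ≤ B := le_trans (abs_nonneg _) hX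
  have hrw : X * (1 - X - α * Y - β * Z) - G * (1 - 3 * G) =
      (X - G) * (1 - X - G - α * G - β * G) - α * (X * (Y - G)) - β * (X * (Z - G)) := by
    linear_combination (-(G ^ 2)) * hαβ
  rw [hrw]
  have t1 : |(X - G) * (1 - X - G - α * G - β * G)| ≤
      M * (1 + 2 * B + |α| * B + |β| * B) := by
    rw [abs_mul]
    apply mul_le_mul h1 ?_ (abs_nonneg _) hM
    have hXb := abs_le.1 hX
    have hGb := abs_le.1 hG
    have haG : |α * G| ≤ |α| * B := by rw [abs_mul]; gcongr
    have hbG : |β * G| ≤ |β| * B := by rw [abs_mul]; gcongr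
    have haG' := abs_le.1 haG
    have hbG' := abs_le.1 hbG
    rw [abs_le]
    constructor <;> [nlinarith; nlinarith]
  have t2 : |α * (X * (Y - G))| ≤ |α| * B * M := by
    rw [abs_mul, abs_mul, ← mul_assoc]
    exact mul_le_mul (by gcongr) h2 (abs_nonneg _)
      (mul_nonneg (abs_nonneg _) hB)
  have t3 : |β * (X * (Z - G))| ≤ |β| * B * M := by
    rw [abs_mul, abs_mul, ← mul_assoc]
    exact mul_le_mul (by gcongr) h3 (abs_nonneg _)
      (mul_nonneg (abs_nonneg _) hB)
  calc |(X - G) * (1 - X - G - α * G - β * G) - α * (X * (Y - G)) - β * (X * (Z - G))|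
      ≤ |(X - G) * (1 - X - G - α * G - β * G) - α * (X * (Y - G))| + |β * (X * (Z - G))| :=
        abs_sub _ _
    _ ≤ (|(X - G) * (1 - X - G - α * G - β * G)| + |α * (X * (Y - G))|) + |β * (X * (Z - G))| := by
        gcongr; exact abs_sub _ _
    _ ≤ M * (1 + 2 * B + |α| * B + |β| * B) + |α| * B * M + |β| * B * M := by
        gcongr
    _ = (1 + 2 * B + 2 * |α| * B + 2 * |β| * B) * M := by ring

/-- `P = ((1-e^{p-q})/(3(1-e^{-q})))·(1,1,1)` is a fixed point of `S = Q_q ∘ L`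
with `L = e^{-p}·`, where `Q` is the symmetric May–Leonard flow with `α + β = 2`
and `0 < p < q`: if `(x₁,x₂,x₃)` solves the system with initial value `L P`,
then at time `q` it returns to `P`. -/
theorem stmt_13 (α β p q P : ℝ) (hαβ : α + β = 2) (hp : 0 < p) (hpq : p < q)
    (hP : P = (1 - Real.exp (p - q)) / (3 * (1 - Real.exp (-q))))
    (x₁ x₂ x₃ : ℝ → ℝ)
    (hx1 : ∀ t, HasDerivAt x₁ (x₁ t * (1 - x₁ t - α * x₂ t - β * x₃ t)) t)
    (hx2 : ∀ t, HasDerivAt x₂ (x₂ t * (1 - β * x₁ t - x₂ t - α * x₃ t)) t)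
    (hx3 : ∀ t, HasDerivAt x₃ (x₃ t * (1 - α * x₁ t - β * x₂ t - x₃ t)) t)
    (hinit : x₁ 0 = Real.exp (-p) * P ∧ x₂ 0 = Real.exp (-p) * P ∧
      x₃ 0 = Real.exp (-p) * P) :
    x₁ q = P ∧ x₂ q = P ∧ x₃ q = P := by
  have hq : 0 < q := hp.trans hpq
  have heq1 : (1:ℝ) < Real.exp q := by
    rw [show (1:ℝ) = Real.exp 0 by simp]; exact Real.exp_lt_exp.2 hq
  -- positivity of P
  have hPpos : 0 < P := by
    rw [hP]
    apply div_pos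
    · have : Real.exp (p - q) < 1 := by
        rw [show (1:ℝ) = Real.exp 0 by simp]; exact Real.exp_lt_exp.2 (by linarith)
      linarith
    · have : Real.exp (-q) < 1 := by
        rw [show (1:ℝ) = Real.exp 0 by simp]; exact Real.exp_lt_exp.2 (by linarith)
      linarith
  set c : ℝ := Real.exp (-p) * P with hc
  have hcpos : 0 < c := mul_pos (Real.exp_pos _) hPpos
  -- explicit diagonal solution
  set D : ℝ → ℝ := fun t => 1 + 3 * c * (Real.exp t - 1) with hD
  set g : ℝ → ℝ := fun t => c * Real.exp t / D t with hg
  have hDpos : ∀ t, 0 ≤ t → 0 < D t := by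
    intro t ht
    have : (1:ℝ) ≤ Real.exp t := Real.one_le_exp ht
    have : 0 ≤ 3 * c * (Real.exp t - 1) := by nlinarith
    simp only [hD]; linarith
  have hgderiv : ∀ t, 0 ≤ t → HasDerivAt g (g t * (1 - 3 * g t)) t := by
    intro t ht
    have hDt : D t ≠ 0 := (hDpos t ht).ne'
    have hnum : HasDerivAt (fun t => c * Real.exp t) (c * Real.exp t) t :=
      (Real.hasDerivAt_exp t).const_mul c
    have hden : HasDerivAt D (3 * c * Real.exp t) t := by
      have : HasDerivAt (fun t => Real.exp t - 1) (Real.exp t) t :=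
        (Real.hasDerivAt_exp t).sub_const 1
      exact (this.const_mul (3 * c)).const_add 1
    have := hnum.div hden hDt
    refine this.congr_deriv ?_
    simp only [g]
    field_simp
  -- the difference vector
  set e₁ : ℝ → ℝ := fun t => x₁ t - g t with he₁
  set e₂ : ℝ → ℝ := fun t => x₂ t - g t with he₂
  set e₃ : ℝ → ℝ := fun t => x₃ t - g t with he₃
  set f : ℝ → ℝ × ℝ × ℝ := fun t => (e₁ t, e₂ t, e₃ t) with hf
  set d₁ : ℝ → ℝ := fun t => x₁ t * (1 - x₁ t - α * x₂ t - β * x₃ t) - g t * (1 - 3 * g t)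
  set d₂ : ℝ → ℝ := fun t => x₂ t * (1 - β * x₁ t - x₂ t - α * x₃ t) - g t * (1 - 3 * g t)
  set d₃ : ℝ → ℝ := fun t => x₃ t * (1 - α * x₁ t - β * x₂ t - x₃ t) - g t * (1 - 3 * g t)
  have hfderiv : ∀ t ∈ Icc 0 q, HasDerivAt f (d₁ t, d₂ t, d₃ t) t := by
    intro t ht
    have h1 : HasDerivAt e₁ (d₁ t) t := (hx1 t).sub (hgderiv t ht.1)
    have h2 : HasDerivAt e₂ (d₂ t) t := (hx2 t).sub (hgderiv t ht.1)
    have h3 : HasDerivAt e₃ (d₃ t) t := (hx3 t).sub (hgderiv t ht.1)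
    exact h1.prodMk (h2.prodMk h3)
  -- bound on the trajectories
  have hcont : ContinuousOn (fun t => max (max |x₁ t| |x₂ t|) (max |x₃ t| |g t|)) (Icc 0 q) := by
    apply ContinuousOn.sup
    · exact ContinuousOn.sup
        (fun t _ => ((hx1 t).continuousAt.continuousWithinAt).abs)
        (fun t _ => ((hx2 t).continuousAt.continuousWithinAt).abs)
    · exact ContinuousOn.sup
        (fun t _ => ((hx3 t).continuousAt.continuousWithinAt).abs)
        (fun t ht => ((hgderiv t ht.1).continuousAt.continuousWithinAt).abs)
  obtain ⟨t₀, ht₀, hmax'⟩ := isCompact_Icc.exists_isMaxOn (nonempty_Icc.2 hq.le) hcont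
  have hmax : ∀ t ∈ Icc (0:ℝ) q, max (max |x₁ t| |x₂ t|) (max |x₃ t| |g t|) ≤
      max (max |x₁ t₀| |x₂ t₀|) (max |x₃ t₀| |g t₀|) := fun t ht => hmax' ht
  set B : ℝ := max (max |x₁ t₀| |x₂ t₀|) (max |x₃ t₀| |g t₀|) with hB
  have hbx1 : ∀ t ∈ Icc 0 q, |x₁ t| ≤ B :=
    fun t ht => le_trans (le_trans (le_max_left _ _) (le_max_left _ _)) (hmax t ht)
  have hbx2 : ∀ t ∈ Icc 0 q, |x₂ t| ≤ B :=
    fun t ht => le_trans (le_trans (le_max_right _ _) (le_max_left _ _)) (hmax t ht)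
  have hbx3 : ∀ t ∈ Icc 0 q, |x₃ t| ≤ B :=
    fun t ht => le_trans (le_trans (le_max_left _ _) (le_max_right _ _)) (hmax t ht)
  have hbg : ∀ t ∈ Icc 0 q, |g t| ≤ B :=
    fun t ht => le_trans (le_trans (le_max_right _ _) (le_max_right _ _)) (hmax t ht)
  set K : ℝ := 1 + 2 * B + 2 * |α| * B + 2 * |β| * B with hK
  -- apply Gronwall
  have hnorm0 : ‖f 0‖ ≤ 0 := by
    obtain ⟨h1, h2, h3⟩ := hinit
    have : f 0 = 0 := by
      simp only [hf, he₁, he₂, he₃, hg, hD]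
      rw [h1, h2, h3]
      norm_num
    rw [this]; simp
  have hcomp : ∀ t ∈ Icc 0 q, |e₁ t| ≤ ‖f t‖ ∧ |e₂ t| ≤ ‖f t‖ ∧ |e₃ t| ≤ ‖f t‖ := by
    intro t _
    refine ⟨?_, ?_, ?_⟩
    · exact le_trans (le_of_eq (Real.norm_eq_abs _).symm) (norm_fst_le (f t))
    · exact le_trans (le_of_eq (Real.norm_eq_abs _).symm)
        (le_trans (norm_fst_le ((f t).2)) (norm_snd_le (f t)))
    · exact le_trans (le_of_eq (Real.norm_eq_abs _).symm)
        (le_trans (norm_snd_le ((f t).2)) (norm_snd_le (f t)))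
  have hbound : ∀ t ∈ Ico 0 q, ‖(d₁ t, d₂ t, d₃ t)‖ ≤ K * ‖f t‖ + 0 := by
    intro t ht
    have ht' : t ∈ Icc 0 q := ⟨ht.1, ht.2.le⟩
    obtain ⟨hc1, hc2, hc3⟩ := hcomp t ht'
    rw [add_zero, Prod.norm_def, Prod.norm_def]
    have k1 : ‖d₁ t‖ ≤ K * ‖f t‖ := by
      rw [Real.norm_eq_abs]
      exact stmt13_key α β B (x₁ t) (x₂ t) (x₃ t) (g t) (‖f t‖) hαβ
        (hbx1 t ht') (hbg t ht') hc1 hc2 hc3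
    have k2 : ‖d₂ t‖ ≤ K * ‖f t‖ := by
      rw [Real.norm_eq_abs]
      have := stmt13_key α β B (x₂ t) (x₃ t) (x₁ t) (g t) (‖f t‖) hαβ
        (hbx2 t ht') (hbg t ht') hc2 hc3 hc1
      calc |d₂ t| = |x₂ t * (1 - x₂ t - α * x₃ t - β * x₁ t) - g t * (1 - 3 * g t)| := by
            simp only [d₂]
            ring_nf
        _ ≤ K * ‖f t‖ := this
    have k3 : ‖d₃ t‖ ≤ K * ‖f t‖ := by
      rw [Real.norm_eq_abs]
      have := stmt13_key α β B (x₃ t) (x₁ t) (x₂ t) (g t) (‖f t‖) hαβ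
        (hbx3 t ht') (hbg t ht') hc3 hc1 hc2
      calc |d₃ t| = |x₃ t * (1 - x₃ t - α * x₁ t - β * x₂ t) - g t * (1 - 3 * g t)| := by
            simp only [d₃]
            ring_nf
        _ ≤ K * ‖f t‖ := this
    exact max_le k1 (max_le k2 k3)
  have hcontf : ContinuousOn f (Icc 0 q) :=
    fun t ht => ((hfderiv t ht).continuousAt.continuousWithinAt)
  have hgron := norm_le_gronwallBound_of_norm_deriv_right_le (δ := 0) (K := K) (ε := 0)
    hcontf (fun t ht => (hfderiv t ⟨ht.1, ht.2.le⟩).hasDerivWithinAt) hnorm0 hbound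
  have hfq : f q = 0 := by
    have := hgron q ⟨hq.le, le_rfl⟩
    rw [gronwallBound_ε0_δ0] at this
    exact norm_le_zero_iff.1 this
  -- hence all coordinates equal `g q`; finally `g q = P`.
  have hgq : g q = P := by
    have hEq : Real.exp q ≠ 0 := (Real.exp_pos q).ne'
    have hEp : Real.exp p ≠ 0 := (Real.exp_pos p).ne'
    have hb1 : Real.exp q - 1 ≠ 0 := by linarith
    have hden : (1:ℝ) - Real.exp (-q) ≠ 0 := by
      rw [Real.exp_neg]
      have : (Real.exp q)⁻¹ < 1 := by
        rw [inv_lt_one_iff₀]; right; exact heq1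
      linarith
    have hDq : D q ≠ 0 := (hDpos q hq.le).ne'
    have hP' : P = (Real.exp q - Real.exp p) / (3 * (Real.exp q - 1)) := by
      rw [hP, Real.exp_sub, Real.exp_neg]
      rw [div_eq_div_iff (by rw [Real.exp_neg] at hden; positivity) (by positivity)]
      field_simp
    simp only [hg]
    rw [div_eq_iff hDq]
    simp only [hD, hc, Real.exp_neg]
    rw [hP']
    field_simp
    ring
  have h1 : e₁ q = 0 := congrArg Prod.fst hfq
  have h2 : e₂ q = 0 := congrArg (fun v => v.2.1) hfq
  have h3 : e₃ q = 0 := congrArg (fun v => v.2.2) hfq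
  simp only [he₁, he₂, he₃, sub_eq_zero] at h1 h2 h3
  exact ⟨h1.trans hgq, h2.trans hgq, h3.trans hgq⟩
end

section
/- If φ - λ(1-φ) ≤ 0 (with λ, ω > 0, φ ∈ [0,1]), then the one-dimensional seasonal logistic Poincaré map S̄(x) = u(φω, e^{-λ(1-φ)ω} x), where u(t,y) = y/(y+(1-y)e^{-t}), satisfies S̄(x) < x for every x > 0; hence S̄ has no positive fixed point and every orbit converges to 0. -/
/-!
The logistic flow `u(t, y) = y / (y + (1 - y) e^{-t})` never grows faster than the linear flow:
`e^t · (y + (1 - y) e^{-t}) = 1 + y (e^t - 1) > 1`, so `u(t, y) < e^t y` for `t, y > 0`.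
Hence the Poincaré map satisfies `S̄(x) < e^{(φ - λ(1-φ))ω} x ≤ x` (when `φ = 0` the growth phase
is trivial and the strict decrease comes from the decay phase instead). A bounded monotone orbit
converges to a fixed point of the continuous map `S̄`, which must then be `0`.
-/

open Real Filter Topology Set Function

theorem tendsto_iterate_zero_of_lt_self {f : ℝ → ℝ} (hmaps : MapsTo f (Ici 0) (Ici 0))
    (h0 : f 0 = 0) (hlt : ∀ y, 0 < y → f y < y) (hcont : ∀ y, 0 ≤ y → ContinuousAt f y)
    {x : ℝ} (hx : 0 ≤ x) : Tendsto (fun n => f^[n] x) atTop (𝓝 0) := by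
  have hmem : ∀ n, 0 ≤ f^[n] x := fun n => hmaps.iterate n hx
  have hle : ∀ y, 0 ≤ y → f y ≤ y := fun y hy => by
    rcases hy.eq_or_lt with rfl | hy
    · exact h0.le
    · exact (hlt y hy).le
  have hanti : Antitone fun n => f^[n] x := antitone_nat_of_succ_le fun n => by
    rw [iterate_succ_apply']
    exact hle _ (hmem n)
  have hlim := tendsto_atTop_ciInf hanti ⟨0, by rintro _ ⟨n, rfl⟩; exact hmem n⟩
  have hL : 0 ≤ ⨅ n, f^[n] x := le_ciInf hmem
  have hfix : IsFixedPt f (⨅ n, f^[n] x) := isFixedPt_of_tendsto_iterate hlim (hcont _ hL)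
  rcases hL.eq_or_lt with hL | hL
  · rwa [← hL] at hlim
  · exact absurd hfix (hlt _ hL).ne

/-- The time-`t` map of the logistic equation `dx/dt = x (1 - x)`. -/
noncomputable def logisticFlow (t y : ℝ) : ℝ := y / (y + (1 - y) * exp (-t))

theorem logisticFlow_denom_pos {t y : ℝ} (ht : 0 ≤ t) (hy : 0 ≤ y) :
    0 < y + (1 - y) * exp (-t) := by
  have hexp : exp (-t) ≤ 1 := exp_le_one_iff.2 (neg_nonpos.2 ht)
  nlinarith [exp_pos (-t)]

theorem logisticFlow_nonneg {t y : ℝ} (ht : 0 ≤ t) (hy : 0 ≤ y) : 0 ≤ logisticFlow t y :=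
  div_nonneg hy (logisticFlow_denom_pos ht hy).le

@[simp]
theorem logisticFlow_zero_left (y : ℝ) : logisticFlow 0 y = y := by
  simp [logisticFlow]

@[simp]
theorem logisticFlow_zero_right (t : ℝ) : logisticFlow t 0 = 0 := by
  simp [logisticFlow]

theorem logisticFlow_lt_exp_mul {t y : ℝ} (ht : 0 < t) (hy : 0 < y) :
    logisticFlow t y < exp t * y := by
  have hden := logisticFlow_denom_pos ht.le hy.le
  have hscaled : exp t * (y + (1 - y) * exp (-t)) = 1 + y * (exp t - 1) := by
    rw [exp_neg]; field_simp; ring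
  have hgrowth : 1 < exp t := one_lt_exp_iff.2 ht
  rw [logisticFlow, div_lt_iff₀ hden, mul_right_comm, hscaled]
  nlinarith [mul_pos (mul_pos hy hy) (sub_pos.2 hgrowth)]

theorem continuousAt_logisticFlow {t y : ℝ} (ht : 0 ≤ t) (hy : 0 ≤ y) :
    ContinuousAt (logisticFlow t) y :=
  ContinuousAt.div (by fun_prop) (by fun_prop) (logisticFlow_denom_pos ht hy).ne'

/-- Decay `dx/dt = -λx` for time `(1-φ)ω`, then logistic growth for time `φω`. -/
noncomputable def seasonalPoincareMap (lam φ ω x : ℝ) : ℝ :=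
  logisticFlow (φ * ω) (exp (-lam * (1 - φ) * ω) * x)

section SeasonalPoincareMap

variable {lam φ ω : ℝ}

theorem seasonalPoincareMap_nonneg (hω : 0 ≤ ω) (hφ : 0 ≤ φ) {x : ℝ} (hx : 0 ≤ x) :
    0 ≤ seasonalPoincareMap lam φ ω x :=
  logisticFlow_nonneg (mul_nonneg hφ hω) (by positivity)

theorem continuousAt_seasonalPoincareMap (hω : 0 ≤ ω) (hφ : 0 ≤ φ) {x : ℝ} (hx : 0 ≤ x) :
    ContinuousAt (seasonalPoincareMap lam φ ω) x :=
  (continuousAt_logisticFlow (mul_nonneg hφ hω) (by positivity)).comp (by fun_prop)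

theorem seasonalPoincareMap_lt_self (hlam : 0 < lam) (hω : 0 < ω) (hφ : 0 ≤ φ)
    (hneg : φ - lam * (1 - φ) ≤ 0) {x : ℝ} (hx : 0 < x) :
    seasonalPoincareMap lam φ ω x < x := by
  rcases hφ.eq_or_lt with rfl | hφ
  · have hdecay : exp (-lam * (1 - 0) * ω) < 1 := exp_lt_one_iff.2 (by nlinarith)
    simpa [seasonalPoincareMap] using mul_lt_of_lt_one_left hx hdecay
  · calc seasonalPoincareMap lam φ ω x
        < exp (φ * ω) * (exp (-lam * (1 - φ) * ω) * x) :=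
          logisticFlow_lt_exp_mul (by positivity) (by positivity)
      _ = exp ((φ - lam * (1 - φ)) * ω) * x := by rw [← mul_assoc, ← exp_add]; ring_nf
      _ ≤ x := mul_le_of_le_one_left hx.le
          (exp_le_one_iff.2 (mul_nonpos_of_nonpos_of_nonneg hneg hω.le))

end SeasonalPoincareMap

/-- If `φ - λ(1-φ) ≤ 0` then the one-dimensional seasonal logistic Poincaré map
`S̄(x) = u(φω, e^{-λ(1-φ)ω} x)` satisfies `S̄(x) < x` for all `x > 0`; hence it has
no positive fixed point and every orbit converges to `0`. -/
theorem stmt_19 (lam ω φ : ℝ) (hlam : 0 < lam) (hω : 0 < ω)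
    (hφ : φ ∈ Set.Icc (0 : ℝ) 1) (hneg : φ - lam * (1 - φ) ≤ 0)
    (S : ℝ → ℝ)
    (hS : ∀ x, S x = Real.exp (-lam * (1 - φ) * ω) * x /
      (Real.exp (-lam * (1 - φ) * ω) * x +
        (1 - Real.exp (-lam * (1 - φ) * ω) * x) * Real.exp (-(φ * ω)))) :
    (∀ x : ℝ, 0 < x → S x < x) ∧
    (∀ x : ℝ, 0 < x → S x ≠ x) ∧
    (∀ x : ℝ, 0 ≤ x → Filter.Tendsto (fun n => S^[n] x) Filter.atTop (nhds 0)) := by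
  obtain rfl : S = seasonalPoincareMap lam φ ω := funext hS
  have hlt := fun x (hx : 0 < x) => seasonalPoincareMap_lt_self hlam hω hφ.1 hneg hx
  refine ⟨hlt, fun x hx => (hlt x hx).ne, fun x hx => ?_⟩
  exact tendsto_iterate_zero_of_lt_self
    (fun y hy => seasonalPoincareMap_nonneg hω.le hφ.1 hy) (by simp [seasonalPoincareMap]) hlt
    (fun y hy => continuousAt_seasonalPoincareMap hω.le hφ.1 hy) hx
end
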